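/- arXiv:1411.2145 — 5 statements merged into one kernel-verified Lean document; each statement's English description precedes it below -/
import Mathlib

section
/- Let p be a prime with p ≡ 1 (mod 4) and let α be an integer that is not a quadratic residue modulo p. Then the quaternion algebra (α, p) over ℚ(i) is a division algebra. -/
/-! Since `p ≡ 1 (mod 4)`, Hensel's lemma makes `-1` a square in `ℚ_p`, so `ℚ(i)` embeds into `ℚ_p`
and it suffices that the reduced norm `a² - αb² - p(c² - αd²)` has no nontrivial zero over `ℚ_p`.
As `α` is not a square mod `p`, the form `a² - αb²` is anisotropic mod `p`, whence
`|a² - αb²| = max(|a|, |b|)²`. The two sides of `a² - αb² = p(c² - αd²)` then have valuations of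
different parity unless all four variables vanish. -/

open Quaternion Polynomial

theorem eq_zero_of_sq_sub_mul_sq_eq_zero {F : Type*} [Field F] {c a b : F} (hc : ¬IsSquare c)
    (h : a ^ 2 - c * b ^ 2 = 0) : a = 0 ∧ b = 0 := by
  have hb : b = 0 := by
    by_contra hb
    exact hc ⟨a / b, by field_simp; linear_combination -h⟩
  subst hb
  exact ⟨by simpa using h, rfl⟩

theorem exists_norm_eq_max_norm {E : Type*} [Norm E] (a b : E) : ∃ m : E, ‖m‖ = max ‖a‖ ‖b‖ := by
  rcases max_choice ‖a‖ ‖b‖ with h | h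
  exacts [⟨a, h.symm⟩, ⟨b, h.symm⟩]

theorem max_norm_eq_zero_iff {E : Type*} [NormedAddGroup E] {a b : E} :
    max ‖a‖ ‖b‖ = 0 ↔ a = 0 ∧ b = 0 := by
  rw [← norm_le_zero_iff (a := a), ← norm_le_zero_iff (a := b), ← max_le_iff]
  exact ⟨le_of_eq, fun h => h.antisymm (le_max_of_le_left (norm_nonneg a))⟩

namespace PadicInt

variable {p : ℕ} [Fact p.Prime]

theorem norm_lt_one_iff_toZMod_eq_zero (x : ℤ_[p]) : ‖x‖ < 1 ↔ toZMod x = 0 := by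
  rw [norm_lt_one_iff_dvd, ← Ideal.mem_span_singleton, ← maximalIdeal_eq_span_p, ← ker_toZMod,
    RingHom.mem_ker]

theorem norm_eq_one_iff_toZMod_ne_zero (x : ℤ_[p]) : ‖x‖ = 1 ↔ toZMod x ≠ 0 := by
  rw [ne_eq, ← norm_lt_one_iff_toZMod_eq_zero, not_lt, (norm_le_one x).ge_iff_eq', eq_comm]

theorem isSquare_of_isSquare_toZMod (hp : p ≠ 2) {u : ℤ_[p]} (hu : IsSquare (toZMod u))
    (hu0 : toZMod u ≠ 0) : IsSquare u := by
  obtain ⟨b, hb⟩ := hu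
  obtain ⟨a, rfl⟩ := ZMod.ringHom_surjective toZMod b
  have hderiv : ‖(X ^ 2 - C u).derivative.aeval a‖ = 1 := by
    have h2 : (2 : ZMod p) ≠ 0 := Ring.two_ne_zero (by rwa [ZMod.ringChar_zmod_n])
    have ha : toZMod a ≠ 0 := by rintro ha; exact hu0 (by rw [hb, ha, zero_mul])
    rw [norm_eq_one_iff_toZMod_ne_zero]
    simpa [one_add_one_eq_two, map_ofNat] using mul_ne_zero h2 ha
  obtain ⟨z, hz, -⟩ := hensels_lemma (F := X ^ 2 - C u) (a := a) (by
    rw [hderiv, one_pow, norm_lt_one_iff_toZMod_eq_zero]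
    simp [hb, sq])
  exact ⟨z, by simpa [sq, sub_eq_zero, eq_comm] using hz⟩

theorem norm_sq_sub_mul_sq_eq_one {α : ℤ} (hα : ¬IsSquare (α : ZMod p)) {a b : ℤ_[p]}
    (hab : max ‖a‖ ‖b‖ = 1) : ‖a ^ 2 - α * b ^ 2‖ = 1 := by
  rw [norm_eq_one_iff_toZMod_ne_zero]
  intro h
  obtain ⟨ha, hb⟩ := eq_zero_of_sq_sub_mul_sq_eq_zero hα (by simpa using h)
  rw [← norm_lt_one_iff_toZMod_eq_zero] at ha hb
  exact (max_lt ha hb).ne hab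

end PadicInt

namespace Padic

variable {p : ℕ} [Fact p.Prime]

theorem norm_sq_sub_mul_sq {α : ℤ} (hα : ¬IsSquare (α : ZMod p)) (a b : ℚ_[p]) :
    ‖a ^ 2 - α * b ^ 2‖ = max ‖a‖ ‖b‖ ^ 2 := by
  obtain ⟨m, hmax⟩ := exists_norm_eq_max_norm a b
  rcases eq_or_ne m 0 with rfl | hm0
  · obtain ⟨rfl, rfl⟩ := max_norm_eq_zero_iff.1 (by rw [← hmax, norm_zero])
    simp
  have hm_pos : 0 < ‖m‖ := norm_pos_iff.2 hm0
  let A : ℤ_[p] := ⟨a / m, by rw [norm_div, div_le_one hm_pos, hmax]; exact le_max_left _ _⟩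
  let B : ℤ_[p] := ⟨b / m, by rw [norm_div, div_le_one hm_pos, hmax]; exact le_max_right _ _⟩
  have hAB : max ‖A‖ ‖B‖ = 1 := by
    change max ‖a / m‖ ‖b / m‖ = 1
    rw [norm_div, norm_div, max_div_div_right hm_pos.le, ← hmax, div_self hm_pos.ne']
  have hunit : ‖(a / m) ^ 2 - α * (b / m) ^ 2‖ = 1 :=
    mod_cast PadicInt.norm_sq_sub_mul_sq_eq_one hα hAB
  have hscale : a ^ 2 - α * b ^ 2 = m ^ 2 * ((a / m) ^ 2 - α * (b / m) ^ 2) := by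
    field_simp
  rw [hscale, norm_mul, norm_pow, hunit, mul_one, hmax]

theorem norm_sq_ne_norm_p_mul_norm_sq (x : ℚ_[p]) {y : ℚ_[p]} (hy : y ≠ 0) :
    ‖x‖ ^ 2 ≠ ‖(p : ℚ_[p])‖ * ‖y‖ ^ 2 := by
  have hp : (1 : ℝ) < p := by exact_mod_cast (Fact.out : p.Prime).one_lt
  rcases eq_or_ne x 0 with rfl | hx
  · simp [eq_comm (a := (0 : ℝ)), hy, (Fact.out : p.Prime).ne_zero]
  rw [norm_eq_zpow_neg_valuation hx, norm_eq_zpow_neg_valuation hy, norm_p, ← zpow_neg_one,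
    ← zpow_natCast, ← zpow_natCast, ← zpow_mul, ← zpow_mul, ← zpow_add₀ (by positivity)]
  intro h
  have := zpow_right_injective₀ (by positivity) hp.ne' h
  omega

theorem eq_zero_of_sq_sub_mul_sq_eq_p_mul {α : ℤ} (hα : ¬IsSquare (α : ZMod p))
    {a b c d : ℚ_[p]} (h : a ^ 2 - α * b ^ 2 = p * (c ^ 2 - α * d ^ 2)) :
    a = 0 ∧ b = 0 ∧ c = 0 ∧ d = 0 := by
  have hnorm := congrArg norm h
  rw [norm_mul, norm_sq_sub_mul_sq hα, norm_sq_sub_mul_sq hα] at hnorm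
  obtain ⟨x, hx⟩ := exists_norm_eq_max_norm a b
  obtain ⟨y, hy⟩ := exists_norm_eq_max_norm c d
  rw [← hx, ← hy] at hnorm
  obtain rfl : y = 0 := by
    by_contra hy0
    exact norm_sq_ne_norm_p_mul_norm_sq x hy0 hnorm
  obtain rfl : x = 0 := by simpa using hnorm
  rw [norm_zero, eq_comm, max_norm_eq_zero_iff] at hx hy
  exact ⟨hx.1, hx.2, hy.1, hy.2⟩

theorem exists_sq_eq_neg_one (hp : p % 4 = 1) : ∃ i : ℚ_[p], i ^ 2 = -1 := by
  obtain ⟨z, hz⟩ := PadicInt.isSquare_of_isSquare_toZMod (p := p) (u := -1) (by omega)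
    (by simpa using ZMod.exists_sq_eq_neg_one_iff.2 (by omega)) (by simp)
  exact ⟨z, by rw [sq, ← PadicInt.coe_mul, ← hz]; simp⟩

end Padic

theorem IsPrimitiveRoot.of_sq_eq_neg_one {R : Type*} [CommRing R] [Nontrivial R]
    (hR : ringChar R ≠ 2) {z : R} (hz : z ^ 2 = -1) : IsPrimitiveRoot z 4 := by
  have : Fact (Nat.Prime 2) := ⟨Nat.prime_two⟩
  have h := orderOf_eq_prime_pow (p := 2) (n := 1) (x := z)
    (by rwa [pow_one, hz, neg_one_eq_one_iff]) (by rw [pow_succ, pow_one, pow_mul, hz]; norm_num)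
  simpa [h] using IsPrimitiveRoot.orderOf z

theorem CyclotomicField.nonempty_algHom {n : ℕ} [NeZero n] {K L : Type*} [Field K] [Field L]
    [Algebra K L] {ζ : L} (hζ : IsPrimitiveRoot ζ n) : Nonempty (CyclotomicField n K →ₐ[K] L) := by
  refine ⟨SplittingField.lift _ ((X_pow_sub_one_splits hζ).of_dvd
    (X_pow_sub_C_ne_zero (NeZero.pos n) _) ?_)⟩
  rw [map_cyclotomic, C_1]
  exact cyclotomic.dvd_X_pow_sub_one n L

namespace QuaternionAlgebra

theorem re_mul_star {R : Type*} [CommRing R] {c₁ c₂ : R} (x : ℍ[R, c₁, c₂]) :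
    (x * star x).re = x.re ^ 2 - c₁ * x.imI ^ 2 - c₂ * x.imJ ^ 2 + c₁ * c₂ * x.imK ^ 2 := by
  simp only [re_mul, re_star, imI_star, imJ_star, imK_star]
  ring

theorem isUnit_of_re_mul_star_ne_zero {K : Type*} [Field K] {c₁ c₂ c₃ : K}
    {x : ℍ[K, c₁, c₂, c₃]} (h : (x * star x).re ≠ 0) : IsUnit x := by
  set n := (x * star x).re
  have hinv : (n⁻¹ : K) • (x * star x) = 1 := by
    rw [mul_star_eq_coe, smul_coe, inv_mul_cancel₀ h, coe_one]
  refine ⟨⟨x, n⁻¹ • star x, ?_, ?_⟩, rfl⟩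
  · rwa [mul_smul_comm]
  · rwa [smul_mul_assoc, star_comm_self']

theorem isUnit_of_ne_zero_of_anisotropic {K : Type*} [Field K] {c₁ c₂ : K}
    (hc : ∀ a b c d : K, a ^ 2 - c₁ * b ^ 2 - c₂ * c ^ 2 + c₁ * c₂ * d ^ 2 = 0 →
      a = 0 ∧ b = 0 ∧ c = 0 ∧ d = 0)
    {x : ℍ[K, c₁, c₂]} (hx : x ≠ 0) : IsUnit x := by
  refine isUnit_of_re_mul_star_ne_zero fun h => hx ?_
  obtain ⟨h₁, h₂, h₃, h₄⟩ := hc _ _ _ _ (by rwa [re_mul_star] at h)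
  ext <;> assumption

end QuaternionAlgebra

/-- For a prime `p ≡ 1 (mod 4)` and an integer `α` that is not a
quadratic residue mod `p`, the quaternion algebra `(α, p)` over `ℚ(i)` is a
division algebra (every nonzero element is a unit). -/
theorem stmt0 (p : ℕ) (hp : p.Prime) (hp4 : p % 4 = 1) (α : ℤ)
    (hα : ¬ IsSquare ((α : ZMod p))) :
    ∀ x : ℍ[CyclotomicField 4 ℚ, (α : CyclotomicField 4 ℚ), (p : CyclotomicField 4 ℚ)],
      x ≠ 0 → IsUnit x := by
  have : Fact p.Prime := ⟨hp⟩
  obtain ⟨i, hi⟩ := Padic.exists_sq_eq_neg_one hp4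
  obtain ⟨φ⟩ := CyclotomicField.nonempty_algHom (K := ℚ)
    (IsPrimitiveRoot.of_sq_eq_neg_one (by simp [ringChar.eq_zero]) hi)
  intro x hx
  refine QuaternionAlgebra.isUnit_of_ne_zero_of_anisotropic (fun a b c d h => ?_) hx
  have hφ := congrArg φ h
  simp only [map_add, map_sub, map_mul, map_pow, map_intCast, map_natCast, map_zero] at hφ
  obtain ⟨ha, hb, hc, hd⟩ := Padic.eq_zero_of_sq_sub_mul_sq_eq_p_mul hα
    (a := φ a) (b := φ b) (c := φ c) (d := φ d) (by linear_combination hφ)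
  simp only [map_eq_zero_iff φ φ.injective] at ha hb hc hd
  exact ⟨ha, hb, hc, hd⟩
end

section
/- The quaternion algebra (10, 29) over ℚ(i) is a division algebra. -/
/-!
A quaternion algebra `(a, b)` over a field is a division algebra as soon as its norm form
`x² - a y² - b z² + a b w²` is anisotropic, since `q * star q` is the norm of `q`.
Clearing denominators reduces anisotropy over `ℚ(i)` to `ℤ[i]`, where `29 = π π'` with
`π = 5 + 2i` and `π' = 5 - 2i`. Reduction modulo `π` is a map onto `𝔽₂₉`, in which `10` is not a
square, so `x² - 10 y² ≡ 0 (mod π)` forces `π ∣ x, y`. Applied twice, this shows that every zero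
of the norm form has all its coordinates divisible by `π`, and dividing them by `π` gives another
zero. Since `ℤ[i]` is a unique factorization domain, this infinite descent only allows the zero
vector.
-/

open Quaternion QuadraticMap

theorem eq_zero_of_forall_pow_dvd {α : Type*} [CommMonoidWithZero α] [IsCancelMulZero α]
    [WfDvdMonoid α] {a b : α} (ha : ¬IsUnit a) (h : ∀ n, a ^ n ∣ b) : b = 0 := by
  by_contra hb
  exact FiniteMultiplicity.not_iff_forall.mpr h (.of_not_isUnit ha hb)

namespace QuadraticMap

theorem anisotropic_of_forall_dvd {R ι : Type*} [CommRing R] [IsDomain R] [WfDvdMonoid R]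
    (Q : QuadraticMap R (ι → R) R) {π : R} (hπ₀ : π ≠ 0) (hπ : ¬IsUnit π)
    (hdvd : ∀ v, Q v = 0 → ∀ i, π ∣ v i) : Q.Anisotropic := by
  have hpow : ∀ n v, Q v = 0 → ∀ i, π ^ n ∣ v i := by
    intro n
    induction n with
    | zero => simp
    | succ n ih =>
      intro v hv i
      choose w hw using hdvd v hv
      have hQw : Q w = 0 := by
        rw [show v = π • w from funext hw, QuadraticMap.map_smul] at hv
        simpa [hπ₀] using hv
      rw [hw i, pow_succ']
      exact mul_dvd_mul_left π (ih w hQw i)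
  intro v hv
  funext i
  exact eq_zero_of_forall_pow_dvd hπ (hpow · v hv i)

theorem anisotropic_weightedSumSquares_of_isFractionRing {R K ι : Type*} [CommRing R]
    [IsDomain R] [Field K] [Algebra R K] [IsFractionRing R K] [Fintype ι] {w : ι → R}
    (h : (weightedSumSquares R w).Anisotropic) :
    (weightedSumSquares K (algebraMap R K ∘ w)).Anisotropic := by
  intro v hv
  obtain ⟨⟨b, hb⟩, hbv⟩ := IsLocalization.exist_integer_multiples_of_finite (nonZeroDivisors R) v
  choose u hu using hbv
  have hu0 : u = 0 := h u <| IsFractionRing.injective R K <| by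
    rw [map_zero]
    calc algebraMap R K (weightedSumSquares R w u)
        = algebraMap R K b ^ 2 * weightedSumSquares K (algebraMap R K ∘ w) v := by
          simp only [weightedSumSquares_apply, map_sum, smul_eq_mul, map_mul, hu, Finset.mul_sum,
            Algebra.smul_def, Function.comp_apply]
          exact Finset.sum_congr rfl fun i _ => by ring
      _ = 0 := by rw [hv, mul_zero]
  have hb₀ : algebraMap R K b ≠ 0 := IsFractionRing.to_map_ne_zero_of_mem_nonZeroDivisors hb
  funext i
  have hi := hu i
  rw [hu0, Pi.zero_apply, map_zero, Algebra.smul_def] at hi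
  exact (mul_eq_zero.mp hi.symm).resolve_left hb₀

end QuadraticMap

namespace QuaternionAlgebra

variable {R : Type*} [CommRing R]

variable (R) in
def normForm (a b : R) : QuadraticMap R (Fin 4 → R) R :=
  weightedSumSquares R ![1, -a, -b, a * b]

theorem isUnit_of_isUnit_re_mul_star {c₁ c₂ c₃ : R} {q : ℍ[R,c₁,c₂,c₃]}
    (h : IsUnit (q * star q).re) : IsUnit q := by
  have hq : IsUnit (q * star q) := by
    rw [mul_star_eq_coe]
    exact h.map (algebraMap R ℍ[R,c₁,c₂,c₃])
  exact ((show Commute q (star q) from (star_comm_self' q).symm).isUnit_mul_iff.mp hq).1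

theorem re_mul_star_eq_normForm {a b : R} (q : ℍ[R,a,b]) :
    (q * star q).re = normForm R a b (equivTuple a 0 b q) := by
  simp only [normForm, equivTuple_apply, weightedSumSquares_apply, Fin.sum_univ_four, smul_eq_mul,
    re_mul, re_star, imI_star, imJ_star, imK_star, Matrix.cons_val]
  ring

theorem isUnit_of_anisotropic_normForm {K : Type*} [Field K] {a b : K}
    (h : (normForm K a b).Anisotropic) {q : ℍ[K,a,b]} (hq : q ≠ 0) : IsUnit q := by
  refine isUnit_of_isUnit_re_mul_star (isUnit_iff_ne_zero.mpr fun h0 => hq ?_)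
  rw [re_mul_star_eq_normForm] at h0
  exact (addEquivTuple a 0 b).map_eq_zero_iff.mp (h _ h0)

theorem anisotropic_normForm_of_isFractionRing {R K : Type*} [CommRing R] [IsDomain R] [Field K]
    [Algebra R K] [IsFractionRing R K] {a b : R} (h : (normForm R a b).Anisotropic) :
    (normForm K (algebraMap R K a) (algebraMap R K b)).Anisotropic := by
  have hw : ![1, -algebraMap R K a, -algebraMap R K b, algebraMap R K a * algebraMap R K b] =
      algebraMap R K ∘ ![1, -a, -b, a * b] := by
    ext i
    fin_cases i <;> simp
  rw [normForm, hw]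
  exact anisotropic_weightedSumSquares_of_isFractionRing h

end QuaternionAlgebra

section Reduction

open QuaternionAlgebra

variable {R F : Type*} [CommRing R] [Field F] (ψ : R →+* F) {π c : R}

theorem dvd_of_dvd_sq_sub_mul_sq (hψ : ∀ x, ψ x = 0 ↔ π ∣ x) (hc : ¬IsSquare (ψ c)) {x y : R}
    (h : π ∣ x ^ 2 - c * y ^ 2) : π ∣ x ∧ π ∣ y := by
  simp only [← hψ, map_sub, map_mul, map_pow, sub_eq_zero] at h ⊢
  by_cases hy : ψ y = 0
  · rw [hy, zero_pow two_ne_zero, mul_zero, pow_eq_zero_iff two_ne_zero] at h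
    exact ⟨h, hy⟩
  · exact absurd ⟨ψ x / ψ y, by field_simp; rw [h]⟩ hc

theorem dvd_of_normForm_eq_zero [IsDomain R] (hψ : ∀ x, ψ x = 0 ↔ π ∣ x)
    (hc : ¬IsSquare (ψ c)) (hπ₀ : π ≠ 0) {π' p : R} (hπ' : ψ π' ≠ 0) (hp : π * π' = p)
    {v : Fin 4 → R} (hv : normForm R c p v = 0) (i : Fin 4) : π ∣ v i := by
  subst hp
  have hv' : v 0 ^ 2 - c * v 1 ^ 2 = π * π' * (v 2 ^ 2 - c * v 3 ^ 2) := by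
    simp only [normForm, weightedSumSquares_apply, Fin.sum_univ_four, smul_eq_mul,
      Matrix.cons_val] at hv
    linear_combination hv
  obtain ⟨⟨x, hx⟩, ⟨y, hy⟩⟩ :=
    dvd_of_dvd_sq_sub_mul_sq ψ hψ hc (hv' ▸ (dvd_mul_right π π').mul_right _)
  have hxy : π * (x ^ 2 - c * y ^ 2) = π' * (v 2 ^ 2 - c * v 3 ^ 2) :=
    mul_left_cancel₀ hπ₀ (by rw [hx, hy] at hv'; linear_combination hv')
  have h23 : π ∣ v 2 ^ 2 - c * v 3 ^ 2 := by
    have h := congrArg ψ hxy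
    rw [map_mul, map_mul, (hψ π).mpr dvd_rfl, zero_mul, eq_comm, mul_eq_zero] at h
    exact (hψ _).mp (h.resolve_left hπ')
  obtain ⟨hz, hw⟩ := dvd_of_dvd_sq_sub_mul_sq ψ hψ hc h23
  fin_cases i
  exacts [⟨x, hx⟩, ⟨y, hy⟩, hz, hw]

end Reduction

instance fact_prime_twentyNine : Fact (Nat.Prime 29) := ⟨by norm_num⟩

namespace GaussianInt

open QuaternionAlgebra

-- `12 ^ 2 ≡ -1 (mod 29)`; the kernel is generated by `5 + 2i`.
def toZModTwentyNine : GaussianInt →+* ZMod 29 := Zsqrtd.lift ⟨12, by decide⟩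

theorem toZModTwentyNine_eq_zero_iff (x : GaussianInt) :
    toZModTwentyNine x = 0 ↔ ⟨5, 2⟩ ∣ x := by
  constructor
  · intro hx
    have hx' : ((x.re + 12 * x.im : ℤ) : ZMod 29) = 0 := by
      change (x.re : ZMod 29) + x.im * 12 = 0 at hx
      push_cast
      linear_combination hx
    obtain ⟨c, hc⟩ := (ZMod.intCast_zmod_eq_zero_iff_dvd _ _).mp hx'
    refine ⟨⟨5 * c - 2 * x.im, x.im - 2 * c⟩, ?_⟩
    ext <;> simp only [Zsqrtd.re_mul, Zsqrtd.im_mul] <;> omega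
  · rintro ⟨y, rfl⟩
    rw [map_mul, show toZModTwentyNine ⟨5, 2⟩ = 0 by decide, zero_mul]

theorem anisotropic_normForm_ten_twentyNine : (normForm GaussianInt 10 29).Anisotropic := by
  have h10 : ¬IsSquare (toZModTwentyNine 10) := by rw [map_ofNat]; decide
  have hπ' : toZModTwentyNine ⟨5, -2⟩ ≠ 0 := by decide
  have hπ : ¬IsUnit (⟨5, 2⟩ : GaussianInt) := by
    rw [Zsqrtd.isUnit_iff_norm_isUnit]
    decide
  exact anisotropic_of_forall_dvd _ (π := ⟨5, 2⟩) (by decide) hπ fun v hv =>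
    dvd_of_normForm_eq_zero toZModTwentyNine toZModTwentyNine_eq_zero_iff h10 (by decide) hπ'
      (by decide) hv

end GaussianInt

namespace IsCyclotomicExtension

open QuaternionAlgebra

variable (K : Type*) [Field K] [Algebra ℚ K] [IsCyclotomicExtension {4} ℚ K]

theorem zeta_four_mul_self : zeta 4 ℚ K * zeta 4 ℚ K = ((-1 : ℤ) : K) := by
  have h : IsPrimitiveRoot (zeta 4 ℚ K ^ 2) 2 :=
    (zeta_spec 4 ℚ K).pow_of_dvd two_ne_zero (by norm_num)
  rw [Int.cast_neg, Int.cast_one, ← _root_.sq, h.eq_neg_one_of_two_right]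

noncomputable abbrev gaussianIntAlgebra : Algebra GaussianInt K :=
  (Zsqrtd.lift ⟨zeta 4 ℚ K, zeta_four_mul_self K⟩).toAlgebra

attribute [local instance] gaussianIntAlgebra

theorem isFractionRing_gaussianInt : IsFractionRing GaussianInt K := by
  have : CharZero K := Algebra.charZero_of_charZero ℚ K
  have : FaithfulSMul GaussianInt K := (faithfulSMul_iff_algebraMap_injective _ _).mpr <|
    Zsqrtd.lift_injective _ fun n => by nlinarith [mul_self_nonneg n]
  refine IsFractionRing.of_field _ _ fun z => ?_
  have hz : z ∈ Subfield.closure (Set.range (algebraMap GaussianInt K)) := by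
    have hz : z ∈ Algebra.adjoin ℚ {zeta 4 ℚ K} := by
      rw [adjoin_primitive_root_eq_top (zeta_spec 4 ℚ K)]
      trivial
    induction hz using Algebra.adjoin_induction with
    | mem x hx =>
      rw [Set.mem_singleton_iff.mp hx]
      exact Subfield.subset_closure ⟨⟨0, 1⟩, by simp [RingHom.algebraMap_toAlgebra]⟩
    | algebraMap q =>
      rw [eq_ratCast]
      exact SubfieldClass.ratCast_mem _ q
    | add x y _ _ hx hy => exact add_mem hx hy
    | mul x y _ _ hx hy => exact mul_mem hx hy
  obtain ⟨x, hx, y, hy, rfl⟩ := Subfield.mem_closure_iff.mp hz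
  rw [← RingHom.coe_range, Subring.closure_eq] at hx hy
  obtain ⟨⟨x, rfl⟩, ⟨y, rfl⟩⟩ := And.intro hx hy
  exact ⟨x, y, rfl⟩

theorem anisotropic_normForm_ten_twentyNine : (normForm K 10 29).Anisotropic := by
  have := isFractionRing_gaussianInt K
  simpa [map_ofNat] using anisotropic_normForm_of_isFractionRing (K := K)
    GaussianInt.anisotropic_normForm_ten_twentyNine

end IsCyclotomicExtension

/-- The quaternion algebra `(10, 29)` over `ℚ(i)` is a division
algebra. -/
theorem stmt10 :
    ∀ x : ℍ[CyclotomicField 4 ℚ, (10 : CyclotomicField 4 ℚ), (29 : CyclotomicField 4 ℚ)],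
      x ≠ 0 → IsUnit x := by
  have : IsCyclotomicExtension {4} ℚ (CyclotomicField 4 ℚ) :=
    CyclotomicField.isCyclotomicExtension 4 ℚ
  exact fun q => QuaternionAlgebra.isUnit_of_anisotropic_normForm
    (IsCyclotomicExtension.anisotropic_normForm_ten_twentyNine _)
end

section
/- A quaternion algebra (α, β) over a field K (char K ≠ 2) is split if and only if β is a norm from the extension K ⊆ K(√α). -/
/-!
Write `N(c + d√α) = c² - α d²` for the norm of `K(√α)/K`. The reduced norm of
`q = w + x i + y j + z k` is `w² - α x² - β y² + α β z² = N(w + x√α) - β N(y + z√α)`, and `q`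
is invertible as soon as its reduced norm is nonzero. A split algebra has a nonzero
non-invertible element, whence `N(w + x√α) = β N(y + z√α)`; if `α` is not a square then
`N(y + z√α) ≠ 0` and `β` is a quotient of norms, hence a norm, while if `α` is a square every
element is a norm. Conversely, if `β = N(c + d√α)`, then `√α` and `v ↦ (c + d√α) v̄` acting on
`K(√α) ≅ K²` satisfy the relations of `i` and `j`; the resulting map `(α, β) → M₂(K)` is onto,
hence bijective by counting dimensions.
-/

open Quaternion Polynomial

namespace AdjoinRoot

variable {K : Type*} [Field K] (α : K)

noncomputable def basisOneRoot : Module.Basis (Fin 2) K (AdjoinRoot (X ^ 2 - C α)) :=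
  (powerBasis (X_pow_sub_C_ne_zero two_pos α)).basis.reindex
    (finCongr (by simp [powerBasis]))

theorem basisOneRoot_zero : basisOneRoot α 0 = 1 := by
  simp [basisOneRoot, PowerBasis.coe_basis]

theorem basisOneRoot_one : basisOneRoot α 1 = root (X ^ 2 - C α) := by
  simp [basisOneRoot, PowerBasis.coe_basis, powerBasis_gen]

theorem root_X_sq_sub_C_sq : root (X ^ 2 - C α) ^ 2 = of _ α := by
  have h := eval₂_root (X ^ 2 - C α)
  rw [eval₂_sub, eval₂_X_pow, eval₂_C] at h
  exact sub_eq_zero.1 h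

theorem leftMulMatrix_basisOneRoot (c d : K) :
    Algebra.leftMulMatrix (basisOneRoot α) (of _ c + d • root (X ^ 2 - C α)) =
      !![c, α * d; d, c] := by
  have h0 : (of _ c + d • root (X ^ 2 - C α)) * basisOneRoot α 0 =
      c • basisOneRoot α 0 + d • basisOneRoot α 1 := by
    simp [basisOneRoot_zero, basisOneRoot_one, Algebra.smul_def]
  have h1 : (of _ c + d • root (X ^ 2 - C α)) * basisOneRoot α 1 =
      (α * d) • basisOneRoot α 0 + c • basisOneRoot α 1 := by
    simp only [basisOneRoot_zero, basisOneRoot_one, Algebra.smul_def, algebraMap_eq, map_mul]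
    linear_combination (of _ d) * root_X_sq_sub_C_sq α
  ext i j
  rw [Algebra.leftMulMatrix_eq_repr_mul]
  fin_cases j
  · rw [Fin.zero_eta, h0]; fin_cases i <;> simp
  · rw [Fin.mk_one, h1]; fin_cases i <;> simp

theorem norm_of_add_smul_root (c d : K) :
    Algebra.norm K (of _ c + d • root (X ^ 2 - C α)) = c ^ 2 - α * d ^ 2 := by
  rw [Algebra.norm_eq_matrix_det (basisOneRoot α), leftMulMatrix_basisOneRoot,
    Matrix.det_fin_two_of]
  ring

theorem exists_of_add_smul_root (z : AdjoinRoot (X ^ 2 - C α)) :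
    ∃ c d : K, of _ c + d • root (X ^ 2 - C α) = z := by
  refine ⟨(basisOneRoot α).repr z 0, (basisOneRoot α).repr z 1, ?_⟩
  conv_rhs => rw [← (basisOneRoot α).sum_repr z]
  simp [Fin.sum_univ_two, basisOneRoot_zero, basisOneRoot_one, Algebra.smul_def]

theorem exists_norm_eq_iff (β : K) :
    (∃ z : AdjoinRoot (X ^ 2 - C α), Algebra.norm K z = β) ↔
      ∃ c d : K, c ^ 2 - α * d ^ 2 = β := by
  constructor
  · rintro ⟨z, rfl⟩
    obtain ⟨c, d, rfl⟩ := exists_of_add_smul_root α z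
    exact ⟨c, d, (norm_of_add_smul_root α c d).symm⟩
  · rintro ⟨c, d, rfl⟩
    exact ⟨_, norm_of_add_smul_root α c d⟩

end AdjoinRoot

section NormForm

variable {K : Type*} [Field K] {α : K}

theorem exists_sq_sub_mul_sq_eq_of_isSquare (h2 : (2 : K) ≠ 0) (hα : α ≠ 0) (hsq : IsSquare α)
    (β : K) : ∃ c d : K, c ^ 2 - α * d ^ 2 = β := by
  obtain ⟨s, rfl⟩ := hsq
  have hs : s ≠ 0 := by rintro rfl; simp at hα
  refine ⟨(β + 1) / 2, (β - 1) / (2 * s), ?_⟩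
  field_simp
  ring

theorem sq_sub_mul_sq_eq_zero_iff (hsq : ¬IsSquare α) {c d : K} :
    c ^ 2 - α * d ^ 2 = 0 ↔ c = 0 ∧ d = 0 := by
  refine ⟨fun h => ?_, by rintro ⟨rfl, rfl⟩; ring⟩
  have hd : d = 0 := by
    by_contra hd
    exact hsq ⟨c / d, by field_simp; linear_combination -h⟩
  subst hd
  simpa using h

end NormForm

namespace QuaternionAlgebra

theorem re_star_mul_self {R : Type*} [CommRing R] {c₁ c₃ : R} (q : ℍ[R, c₁, c₃]) :
    (star q * q).re = q.re ^ 2 - c₁ * q.imI ^ 2 - c₃ * q.imJ ^ 2 + c₁ * c₃ * q.imK ^ 2 := by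
  simp; ring

variable {K : Type*} [Field K]

theorem isUnit_of_re_star_mul_self_ne_zero {c₁ c₂ c₃ : K} {q : ℍ[K, c₁, c₂, c₃]}
    (h : (star q * q).re ≠ 0) : IsUnit q := by
  set n := (star q * q).re
  have hinv : ((n⁻¹ : K) : ℍ[K, c₁, c₂, c₃]) * star q * q = 1 := by
    rw [mul_assoc, star_mul_eq_coe, ← coe_mul, inv_mul_cancel₀ h, coe_one]
  refine ⟨⟨q, _, ?_, hinv⟩, rfl⟩
  rw [← mul_assoc, ← comm, mul_assoc, ← star_comm_self', ← mul_assoc, hinv]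

theorem exists_ne_zero_re_star_mul_self_eq_zero_of_algEquiv {c₁ c₂ c₃ : K}
    (e : ℍ[K, c₁, c₂, c₃] ≃ₐ[K] Matrix (Fin 2) (Fin 2) K) :
    ∃ q : ℍ[K, c₁, c₂, c₃], q ≠ 0 ∧ (star q * q).re = 0 := by
  refine ⟨e.symm !![1, 0; 0, 0], ?_, ?_⟩
  · rw [ne_eq, EmbeddingLike.map_eq_zero_iff, ← Matrix.ext_iff]
    simp
  · by_contra h
    have := (isUnit_of_re_star_mul_self_ne_zero h).map e
    simp [Matrix.isUnit_iff_isUnit_det] at this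

theorem exists_sq_sub_mul_sq_eq_of_re_star_mul_self_eq_zero (h2 : (2 : K) ≠ 0) {α β : K}
    (hα : α ≠ 0) {q : ℍ[K, α, β]} (hq : q ≠ 0) (hn : (star q * q).re = 0) :
    ∃ c d : K, c ^ 2 - α * d ^ 2 = β := by
  by_cases hsq : IsSquare α
  · exact exists_sq_sub_mul_sq_eq_of_isSquare h2 hα hsq β
  obtain ⟨w, x, y, z⟩ := q
  rw [re_star_mul_self] at hn
  dsimp only at hn
  have hD : y ^ 2 - α * z ^ 2 ≠ 0 := by
    intro hD
    obtain ⟨rfl, rfl⟩ := (sq_sub_mul_sq_eq_zero_iff hsq).1 hD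
    obtain ⟨rfl, rfl⟩ := (sq_sub_mul_sq_eq_zero_iff hsq (c := w) (d := x)).1
      (by linear_combination hn)
    exact hq rfl
  -- Brahmagupta: `(w² - α x²)(y² - α z²) = (w y + α x z)² - α (w z + x y)²`.
  refine ⟨(w * y + α * x * z) / (y ^ 2 - α * z ^ 2), (w * z + x * y) / (y ^ 2 - α * z ^ 2), ?_⟩
  field_simp
  linear_combination (y ^ 2 - α * z ^ 2) * hn

/-- On `K(√α) ≅ K²` with basis `1, √α`, `i` is multiplication by `√α` and `j` is `v ↦ (c + d√α) v̄`;
then `j² = N(c + d√α)` and `ij = -ji`. -/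
def splittingBasis (α c d : K) :
    Basis (Matrix (Fin 2) (Fin 2) K) α 0 (c ^ 2 - α * d ^ 2) where
  i := !![0, α; 1, 0]
  j := !![c, -(α * d); d, -c]
  k := !![α * d, -(α * c); c, -(α * d)]
  i_mul_i := by ext i j; fin_cases i <;> fin_cases j <;> simp
  j_mul_j := by ext i j; fin_cases i <;> fin_cases j <;> simp <;> ring
  i_mul_j := by ext i j; fin_cases i <;> fin_cases j <;> simp
  j_mul_i := by ext i j; fin_cases i <;> fin_cases j <;> simp <;> ring

theorem splittingBasis_liftHom_surjective (h2 : (2 : K) ≠ 0) {α c d : K} (hα : α ≠ 0)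
    (hβ : c ^ 2 - α * d ^ 2 ≠ 0) : Function.Surjective (splittingBasis α c d).liftHom := by
  set β := c ^ 2 - α * d ^ 2
  intro M
  refine ⟨⟨(M 0 0 + M 1 1) / 2, (α * M 1 0 + M 0 1) / (2 * α),
    (c * (M 0 0 - M 1 1) - d * (α * M 1 0 - M 0 1)) / (2 * β),
    (c * (α * M 1 0 - M 0 1) - d * α * (M 0 0 - M 1 1)) / (2 * α * β)⟩, ?_⟩
  ext i j
  fin_cases i <;> fin_cases j <;>
  · simp [Basis.lift, splittingBasis, Matrix.algebraMap_matrix_apply]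
    field_simp
    ring

theorem exists_sq_sub_mul_sq_eq_of_algEquiv_matrix (h2 : (2 : K) ≠ 0) {α β : K} (hα : α ≠ 0)
    (e : ℍ[K, α, β] ≃ₐ[K] Matrix (Fin 2) (Fin 2) K) : ∃ c d : K, c ^ 2 - α * d ^ 2 = β := by
  obtain ⟨q, hq, hn⟩ := exists_ne_zero_re_star_mul_self_eq_zero_of_algEquiv e
  exact exists_sq_sub_mul_sq_eq_of_re_star_mul_self_eq_zero h2 hα hq hn

theorem nonempty_algEquiv_matrix_of_sq_sub_mul_sq_eq (h2 : (2 : K) ≠ 0) {α β c d : K}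
    (hα : α ≠ 0) (hβ : β ≠ 0) (hcd : c ^ 2 - α * d ^ 2 = β) :
    Nonempty (ℍ[K, α, β] ≃ₐ[K] Matrix (Fin 2) (Fin 2) K) := by
  subst hcd
  have hsurj := splittingBasis_liftHom_surjective h2 hα hβ
  have hinj : Function.Injective (splittingBasis α c d).liftHom :=
    (LinearMap.injective_iff_surjective_of_finrank_eq_finrank
      (f := (splittingBasis α c d).liftHom.toLinearMap)
      (by simp [finrank_eq_four, Module.finrank_matrix])).2 hsurj
  exact ⟨AlgEquiv.ofBijective _ ⟨hinj, hsurj⟩⟩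

end QuaternionAlgebra

/-- A quaternion algebra `(α, β)` over a field `K` of
characteristic `≠ 2` (with `α, β ∈ K*`) is split iff `β` is a norm from the
extension `K ⊆ K(√α)`. -/
theorem stmt12 (K : Type*) [Field K] (hchar : (2 : K) ≠ 0) (α β : K)
    (hα : α ≠ 0) (hβ : β ≠ 0) :
    Nonempty (ℍ[K, α, β] ≃ₐ[K] Matrix (Fin 2) (Fin 2) K) ↔
      ∃ z : AdjoinRoot (X ^ 2 - C α), Algebra.norm K z = β := by
  rw [AdjoinRoot.exists_norm_eq_iff]
  exact ⟨fun ⟨e⟩ => QuaternionAlgebra.exists_sq_sub_mul_sq_eq_of_algEquiv_matrix hchar hα e,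
    fun ⟨_, _, hcd⟩ =>
      QuaternionAlgebra.nonempty_algEquiv_matrix_of_sq_sub_mul_sq_eq hchar hα hβ hcd⟩
end

section
/- Let p' be a prime with p' ≡ 1 (mod 4), and let p be an odd prime divisor of an integer α such that every prime divisor of α is a quadratic residue modulo p'. Then the Hilbert symbol (α, p')_p over ℚ equals 1. -/
open Classical in
/-- The Hilbert symbol `(a, b)_p` over the `p`-adic field `ℚ_p`. -/
noncomputable def hilbertSymbol (p : ℕ) [Fact p.Prime] (a b : ℚ_[p]) : ℤ :=
  if ∃ x y z : ℚ_[p], (x, y, z) ≠ (0, 0, 0) ∧ a * x ^ 2 + b * y ^ 2 = z ^ 2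
  then 1 else -1

/-!
If `p ≠ p'`, then `p` divides `α`, so `p` is a square mod `p'`; by quadratic reciprocity `p'` is
a nonzero square mod `p`, hence a square in `ℚ_p` by Hensel's lemma, and `(α, p')_p = 1`.
If `p = p'`, then `-1` is a square mod `p`, so writing `α = p^k m` with `p ∤ m`, the unit `m`
is a square mod `p` and thus in `ℚ_p`. For even `k` this makes `α` a square; for odd `k` it
makes `-α / p` a square, and `α x² + p y² = 0` has a nontrivial solution.
-/

open Polynomial

section SquaresOfPrimeDivisors

variable {R : Type*}

theorem isSquare_natCast_of_forall_prime_dvd [CommSemiring R] {N : ℕ}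
    (h : ∀ r : ℕ, r.Prime → r ∣ N → IsSquare (r : R)) : IsSquare (N : R) := by
  induction N using Nat.recOnMul with
  | zero => simp
  | one => simp
  | prime r hr => exact h r hr dvd_rfl
  | mul a b ha hb =>
    push_cast
    exact (ha fun r hr hd => h r hr (hd.mul_right b)).mul
      (hb fun r hr hd => h r hr (hd.mul_left a))

theorem isSquare_intCast_of_forall_prime_dvd [CommRing R] (h₁ : IsSquare (-1 : R)) {m : ℤ}
    (h : ∀ r : ℕ, r.Prime → (r : ℤ) ∣ m → IsSquare (r : R)) : IsSquare (m : R) := by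
  have habs : IsSquare (m.natAbs : R) :=
    isSquare_natCast_of_forall_prime_dvd fun r hr hd =>
      h r hr (Int.natCast_dvd.mpr hd)
  rcases Int.natAbs_eq m with he | he
  · rw [he, Int.cast_natCast]
    exact habs
  · rw [he, Int.cast_neg, Int.cast_natCast, neg_eq_neg_one_mul]
    exact h₁.mul habs

end SquaresOfPrimeDivisors

namespace PadicInt

variable {p : ℕ} [Fact p.Prime]

theorem isSquare_intCast_of_isSquare_zmod (hp : p ≠ 2) {n : ℤ} (hn : ¬ (p : ℤ) ∣ n)
    (h : IsSquare (n : ZMod p)) : IsSquare (n : ℤ_[p]) := by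
  obtain ⟨c, hc⟩ := h
  obtain ⟨a, rfl⟩ := ZMod.intCast_surjective c
  set F : ℤ[X] := X ^ 2 - C n
  have hF : ‖aeval (a : ℤ_[p]) F‖ < 1 := by
    have : ((a ^ 2 - n : ℤ) : ZMod p) = 0 := by push_cast; rw [hc]; ring
    simpa [F] using
      (norm_int_lt_one_iff_dvd _).mpr ((ZMod.intCast_zmod_eq_zero_iff_dvd _ _).mp this)
  have hF' : ‖aeval (a : ℤ_[p]) (derivative F)‖ = 1 := by
    have h2a : ¬ (p : ℤ) ∣ 2 * a := by
      rw [← ZMod.intCast_zmod_eq_zero_iff_dvd, Int.cast_mul, Int.cast_ofNat]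
      refine mul_ne_zero (Ring.two_ne_zero (by rwa [ZMod.ringChar_zmod_n])) fun ha => hn ?_
      rw [← ZMod.intCast_zmod_eq_zero_iff_dvd, hc, ha, mul_zero]
    have hderiv : aeval (a : ℤ_[p]) (derivative F) = ((2 * a : ℤ) : ℤ_[p]) := by
      rw [derivative_sub, derivative_X_sq, derivative_C, sub_zero, map_mul, aeval_C, aeval_X]
      simp
    rw [hderiv, norm_intCast_eq_one_iff, isCoprime_comm]
    exact (Nat.prime_iff_prime_int.mp Fact.out).coprime_iff_not_dvd.mpr h2a
  obtain ⟨z, hz, -⟩ := hensels_lemma (F := F) (a := (a : ℤ_[p])) (by rwa [hF', one_pow])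
  have hz' : z * z = n := by simpa [F, sub_eq_zero, sq] using hz
  exact ⟨z, hz'.symm⟩

end PadicInt

theorem Padic.isSquare_intCast_of_isSquare_zmod {p : ℕ} [Fact p.Prime] (hp : p ≠ 2) {n : ℤ}
    (hn : ¬ (p : ℤ) ∣ n) (h : IsSquare (n : ZMod p)) : IsSquare (n : ℚ_[p]) := by
  simpa using (PadicInt.isSquare_intCast_of_isSquare_zmod hp hn h).map PadicInt.Coe.ringHom

namespace hilbertSymbol

variable {p : ℕ} [Fact p.Prime] {a b : ℚ_[p]}

theorem eq_one_of_solution {x y z : ℚ_[p]} (hxyz : (x, y, z) ≠ (0, 0, 0))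
    (h : a * x ^ 2 + b * y ^ 2 = z ^ 2) : hilbertSymbol p a b = 1 :=
  if_pos ⟨x, y, z, hxyz, h⟩

theorem eq_one_of_isSquare_left (ha : IsSquare a) (b : ℚ_[p]) : hilbertSymbol p a b = 1 := by
  obtain ⟨s, rfl⟩ := ha
  exact eq_one_of_solution (x := 1) (y := 0) (z := s) (by simp) (by ring)

theorem eq_one_of_isSquare_right (a : ℚ_[p]) (hb : IsSquare b) : hilbertSymbol p a b = 1 := by
  obtain ⟨s, rfl⟩ := hb
  exact eq_one_of_solution (x := 0) (y := 1) (z := s) (by simp) (by ring)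

theorem eq_one_of_eq_neg_mul_sq {t : ℚ_[p]} (h : a = -(b * t ^ 2)) : hilbertSymbol p a b = 1 :=
  eq_one_of_solution (x := 1) (y := t) (z := 0) (by simp) (by rw [h]; ring)

theorem intCast_natCast_self_eq_one (hp : p ≠ 2) (h₁ : IsSquare (-1 : ZMod p)) {α : ℤ}
    (hα : ∀ r : ℕ, r.Prime → (r : ℤ) ∣ α → IsSquare (r : ZMod p)) :
    hilbertSymbol p α p = 1 := by
  rcases eq_or_ne α 0 with rfl | hα₀
  · exact eq_one_of_isSquare_left (by simp) _
  obtain ⟨m, hm, hmp⟩ := (Int.finiteMultiplicity_iff (a := p).mpr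
    ⟨by simpa using (Fact.out : p.Prime).ne_one, hα₀⟩).exists_eq_pow_mul_and_not_dvd
  set k := multiplicity (p : ℤ) α
  obtain ⟨s, hs⟩ : IsSquare (m : ℚ_[p]) :=
    Padic.isSquare_intCast_of_isSquare_zmod hp hmp <| isSquare_intCast_of_forall_prime_dvd h₁
      fun r hr hrm => hα r hr (hm ▸ hrm.mul_left _)
  rw [hm]
  push_cast
  rcases Nat.even_or_odd k with ⟨j, hj⟩ | ⟨j, hj⟩
  · exact eq_one_of_isSquare_left ⟨(p : ℚ_[p]) ^ j * s, by rw [hj, hs]; ring⟩ _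
  · obtain ⟨i, hi⟩ : IsSquare (-1 : ℚ_[p]) := by
      exact_mod_cast Padic.isSquare_intCast_of_isSquare_zmod hp (n := -1)
        (by rw [Int.dvd_neg]; exact_mod_cast (Fact.out : p.Prime).not_dvd_one)
        (by exact_mod_cast h₁)
    refine eq_one_of_eq_neg_mul_sq (t := (p : ℚ_[p]) ^ j * s * i) ?_
    rw [hj]
    linear_combination (p : ℚ_[p]) ^ (2 * j + 1) * (hs - s ^ 2 * hi)

end hilbertSymbol

/-- Let `p'` be a prime with `p' ≡ 1 (mod 4)` and `p` an odd prime
divisor of an integer `α` all of whose prime divisors are quadratic residues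
mod `p'`.  Then the Hilbert symbol `(α, p')_p` equals `1`. -/
theorem stmt17 (p' : ℕ) (hp' : p'.Prime) (hp'4 : p' % 4 = 1)
    (p : ℕ) [hp : Fact p.Prime] (hodd : p ≠ 2) (α : ℤ) (hpα : (p : ℤ) ∣ α)
    (hQR : ∀ r : ℕ, r.Prime → (r : ℤ) ∣ α → IsSquare ((r : ZMod p'))) :
    hilbertSymbol p (α : ℚ_[p]) (p' : ℚ_[p]) = 1 := by
  rcases eq_or_ne p p' with rfl | hne
  · exact hilbertSymbol.intCast_natCast_self_eq_one hodd
      (ZMod.exists_sq_eq_neg_one_iff.mpr (by omega)) hQR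
  have : Fact p'.Prime := ⟨hp'⟩
  have hsq : IsSquare (p' : ZMod p) :=
    (ZMod.exists_sq_eq_prime_iff_of_mod_four_eq_one hp'4 hodd).mp (hQR p hp.out hpα)
  have hndvd : ¬ (p : ℤ) ∣ p' := by
    exact_mod_cast (Nat.prime_dvd_prime_iff_eq hp.out hp').not.mpr hne
  exact hilbertSymbol.eq_one_of_isSquare_right _ <| by
    exact_mod_cast Padic.isSquare_intCast_of_isSquare_zmod hodd hndvd (by exact_mod_cast hsq)
end

section
/- Let p' be a prime with p' ≡ 1 (mod 4) and α an integer such that every prime divisor of α is a quadratic residue modulo p'. Then the quaternion algebra (α, p') over ℚ is split. -/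
/-!
The quaternion algebra `(a, b)` splits as soon as `a` is a norm `u² - b v²` from `ℚ(√b)`: then
`i ↦ [[u, v], [-b v, -u]]`, `j ↦ [[0, 1], [b, 0]]` defines an injective, hence bijective,
algebra map into `M₂(ℚ)`. Norms form a monoid, so it suffices to treat `-1` and the primes
dividing `α`. Since `p ≡ 1 [MOD 4]`, `p = m² + n²` makes `-1` a norm, and `p = (-1)(-p)` is one.
For a prime `q ≠ p` that is a square mod `p`, quadratic reciprocity makes `p` a square mod `q`,
and Legendre's pigeonhole argument then produces a rational point on `q x² + p y² = z²`.
Finally `α ≠ 0`, because some prime is a non-residue mod `p`.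
-/

open Quaternion

abbrev normSubmonoid {R : Type*} [CommRing R] (d : R) : Submonoid R :=
  MonoidHom.mrange (QuadraticAlgebra.norm : QuadraticAlgebra R d 0 →* R)

theorem mem_normSubmonoid {R : Type*} [CommRing R] {d x : R} :
    x ∈ normSubmonoid d ↔ ∃ u v : R, u ^ 2 - d * v ^ 2 = x := by
  constructor
  · rintro ⟨z, rfl⟩
    exact ⟨z.re, z.im, by rw [QuadraticAlgebra.norm_def]; ring⟩
  · rintro ⟨u, v, rfl⟩
    exact ⟨⟨u, v⟩, by rw [QuadraticAlgebra.norm_def]; ring⟩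

section Conic

variable {K : Type*} [Field K] {a b x y z : K}

theorem mem_normSubmonoid_of_sq_eq (hx : x ≠ 0) (h : z ^ 2 = a * x ^ 2 + b * y ^ 2) :
    a ∈ normSubmonoid b :=
  mem_normSubmonoid.mpr ⟨z / x, y / x, by field_simp; linear_combination h⟩

/-- `N(z + y√b) N(x + √b) = N(zx + by + (z + xy)√b)`. -/
theorem mem_normSubmonoid_of_sq_sub_mul_sq_eq (hx : x ^ 2 ≠ b)
    (h : z ^ 2 - b * y ^ 2 = a * (x ^ 2 - b)) : a ∈ normSubmonoid b :=
  mem_normSubmonoid_of_sq_eq (x := x ^ 2 - b) (y := z + x * y) (z := z * x + b * y)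
    (sub_ne_zero.mpr hx) (by linear_combination (x ^ 2 - b) * h)

theorem eq_zero_of_sq_eq_mul_sq (hb : ¬IsSquare b) (h : z ^ 2 = b * y ^ 2) : y = 0 := by
  by_contra hy
  exact hb ⟨z / y, by field_simp; linear_combination -h⟩

end Conic

theorem sq_sub_le_of_mem_Icc_sqrt {n : ℕ} {u v : ℤ} (hu : u ∈ Finset.Icc 0 (n.sqrt : ℤ))
    (hv : v ∈ Finset.Icc 0 (n.sqrt : ℤ)) : (u - v) ^ 2 ≤ n := by
  rw [Finset.mem_Icc] at hu hv
  have : (n.sqrt : ℤ) ^ 2 ≤ n := by exact_mod_cast Nat.sqrt_le' n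
  nlinarith

theorem exists_ne_zero_small_congr (a b : ℕ) [NeZero a] [NeZero b] (s t : ℤ) :
    ∃ x y z : ℤ, (x, y, z) ≠ 0 ∧ x ^ 2 ≤ b ∧ y ^ 2 ≤ a ∧ z ^ 2 ≤ a * b ∧
      (a : ℤ) ∣ z - t * y ∧ (b : ℤ) ∣ z - s * x := by
  let box : Finset (ℤ × ℤ × ℤ) :=
    Finset.Icc 0 (b.sqrt : ℤ) ×ˢ Finset.Icc 0 (a.sqrt : ℤ) ×ˢ Finset.Icc 0 ((a * b).sqrt : ℤ)
  have hcard : (Finset.univ : Finset (ZMod a × ZMod b)).card < box.card := by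
    have hlt : a * b < (b.sqrt + 1) * ((a.sqrt + 1) * ((a * b).sqrt + 1)) := by
      have := Nat.mul_lt_mul'' (Nat.lt_succ_sqrt b) (Nat.mul_lt_mul'' (Nat.lt_succ_sqrt a)
        (Nat.lt_succ_sqrt (a * b)))
      exact Nat.mul_self_lt_mul_self_iff.mp (by linarith)
    simpa [box, ZMod.card] using hlt
  obtain ⟨w, hw, w', hw', hne, heq⟩ := Finset.exists_ne_map_eq_of_card_lt_of_maps_to hcard
    (f := fun w ↦ (((w.2.2 - t * w.2.1 : ℤ) : ZMod a), ((w.2.2 - s * w.1 : ℤ) : ZMod b)))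
    fun _ _ ↦ Finset.mem_coe.mpr (Finset.mem_univ _)
  simp only [box, Finset.mem_product] at hw hw'
  simp only [Prod.mk.injEq, ZMod.intCast_eq_intCast_iff_dvd_sub] at heq
  refine ⟨w'.1 - w.1, w'.2.1 - w.2.1, w'.2.2 - w.2.2, ?_, sq_sub_le_of_mem_Icc_sqrt hw'.1 hw.1,
    sq_sub_le_of_mem_Icc_sqrt hw'.2.1 hw.2.1, ?_, ?_, ?_⟩
  · intro h
    simp only [Prod.mk_eq_zero, sub_eq_zero] at h
    exact hne (Prod.ext h.1.symm (Prod.ext h.2.1.symm h.2.2.symm))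
  · exact_mod_cast sq_sub_le_of_mem_Icc_sqrt hw'.2.2 hw.2.2
  · convert heq.1 using 1; ring
  · convert heq.2 using 1; ring

theorem Nat.Coprime.isSquare_right_of_isSquare_mul {a b : ℕ} (hab : a.Coprime b)
    (h : IsSquare (a * b)) : IsSquare b := by
  obtain ⟨c, hc⟩ := h
  obtain ⟨d, hd⟩ := exists_eq_pow_of_mul_eq_pow (k := 2) (Nat.isUnit_iff.mpr hab.symm)
    (show b * a = c ^ 2 by rw [mul_comm, hc, sq])
  exact ⟨d, hd.trans (sq d)⟩

theorem natCast_mem_normSubmonoid_of_dvd_sq_sub {a b : ℕ} [NeZero a] [NeZero b]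
    (hab : a.Coprime b) (hb : ¬IsSquare b) {s t : ℤ} (ht : (a : ℤ) ∣ t ^ 2 - b)
    (hs : (b : ℤ) ∣ s ^ 2 - a) :
    (a : ℚ) ∈ normSubmonoid (b : ℚ) := by
  obtain ⟨x, y, z, hne, hx, hy, hz, hza, hzb⟩ := exists_ne_zero_small_congr a b s t
  have hdvd : (a * b : ℤ) ∣ z ^ 2 - a * x ^ 2 - b * y ^ 2 := by
    apply (Nat.isCoprime_iff_coprime.mpr hab).mul_dvd
    · rw [show z ^ 2 - a * x ^ 2 - b * y ^ 2 = (z - t * y) * (z + t * y) + (t ^ 2 - b) * y ^ 2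
        - a * x ^ 2 by ring]
      exact ((hza.mul_right _).add (ht.mul_right _)).sub (dvd_mul_right _ _)
    · rw [show z ^ 2 - a * x ^ 2 - b * y ^ 2 = (z - s * x) * (z + s * x) + (s ^ 2 - a) * x ^ 2
        - b * y ^ 2 by ring]
      exact ((hzb.mul_right _).add (hs.mul_right _)).sub (dvd_mul_right _ _)
  obtain ⟨k, hk⟩ := hdvd
  have ha0 : (0 : ℤ) < a := by exact_mod_cast Nat.pos_of_neZero a
  have hb0 : (0 : ℤ) < b := by exact_mod_cast Nat.pos_of_neZero b
  have hbZ : ¬IsSquare (b : ℤ) := Int.isSquare_natCast_iff.not.mpr hb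
  have hbQ : ¬IsSquare (b : ℚ) := Rat.isSquare_natCast_iff.not.mpr hb
  have hk_lo : -2 ≤ k := by
    by_contra! h
    nlinarith [mul_pos ha0 hb0]
  have hk_hi : k ≤ 1 := by
    by_contra! h
    nlinarith [mul_pos ha0 hb0]
  -- The extreme cases `k = -2` and `k = 1` force `x ^ 2 = b` and `z ^ 2 = a * b` respectively.
  interval_cases k
  · exact (hbZ ⟨x, by nlinarith⟩).elim
  · have hQ : (z : ℚ) ^ 2 - b * y ^ 2 = a * (x ^ 2 - b) := by
      exact_mod_cast (by linear_combination hk : z ^ 2 - (b : ℤ) * y ^ 2 = a * (x ^ 2 - b))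
    exact mem_normSubmonoid_of_sq_sub_mul_sq_eq (fun h ↦ hbQ ⟨x, by rw [← h, sq]⟩) hQ
  · have hQ : (z : ℚ) ^ 2 = a * x ^ 2 + b * y ^ 2 := by
      exact_mod_cast (by linear_combination hk : z ^ 2 = (a : ℤ) * x ^ 2 + b * y ^ 2)
    refine mem_normSubmonoid_of_sq_eq (fun hx ↦ hne ?_) hQ
    have hy := eq_zero_of_sq_eq_mul_sq (z := (z : ℚ)) (y := (y : ℚ)) hbQ (by rw [hQ, hx]; ring)
    simp_all
  · exfalso
    have hx : x = 0 := by nlinarith [sq_nonneg y]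
    have hy : y = 0 := by nlinarith [sq_nonneg x]
    refine hb (hab.isSquare_right_of_isSquare_mul (Int.isSquare_natCast_iff.mp ⟨z, ?_⟩))
    subst hx hy
    push_cast
    linear_combination -hk

theorem exists_dvd_sq_sub_of_isSquare {n m : ℕ} (h : IsSquare (m : ZMod n)) :
    ∃ s : ℤ, (n : ℤ) ∣ s ^ 2 - m := by
  obtain ⟨c, hc⟩ := h
  refine ⟨c.cast, (ZMod.intCast_eq_intCast_iff_dvd_sub _ _ _).mp ?_⟩
  push_cast
  rw [hc, sq]

section PrimeOneModFour

variable {p : ℕ} [Fact p.Prime]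

theorem neg_one_mem_normSubmonoid (hp : p % 4 = 1) : (-1 : ℚ) ∈ normSubmonoid (p : ℚ) := by
  obtain ⟨m, n, hmn⟩ := Nat.Prime.sq_add_sq (p := p) (by omega)
  have hn : n ≠ 0 := by
    rintro rfl
    exact (Fact.out : p.Prime).prime.not_isSquare ⟨m, by rw [← hmn]; ring⟩
  refine mem_normSubmonoid_of_sq_eq (x := (n : ℚ)) (y := 1) (z := m) (by exact_mod_cast hn) ?_
  rw [← hmn]
  push_cast
  ring

theorem natCast_prime_mem_normSubmonoid (hp : p % 4 = 1) {q : ℕ} (hq : q.Prime)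
    (hqp : IsSquare (q : ZMod p)) : (q : ℚ) ∈ normSubmonoid (p : ℚ) := by
  rcases eq_or_ne q p with rfl | hne
  · have h : -(q : ℚ) ∈ normSubmonoid (q : ℚ) := mem_normSubmonoid.mpr ⟨0, 1, by ring⟩
    simpa using mul_mem (neg_one_mem_normSubmonoid hp) h
  have : Fact q.Prime := ⟨hq⟩
  have hpq : IsSquare (p : ZMod q) := by
    rcases eq_or_ne q 2 with rfl | hq2
    · exact FiniteField.isSquare_of_char_two (ZMod.ringChar_zmod_n 2) _
    · exact (ZMod.exists_sq_eq_prime_iff_of_mod_four_eq_one hp hq2).mp hqp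
  obtain ⟨s, hs⟩ := exists_dvd_sq_sub_of_isSquare hqp
  obtain ⟨t, ht⟩ := exists_dvd_sq_sub_of_isSquare hpq
  exact natCast_mem_normSubmonoid_of_dvd_sq_sub ((Nat.coprime_primes hq Fact.out).mpr hne)
    (Fact.out : p.Prime).prime.not_isSquare ht hs

theorem intCast_mem_normSubmonoid (hp : p % 4 = 1) (α : ℤ)
    (h : ∀ r : ℕ, r.Prime → (r : ℤ) ∣ α → IsSquare (r : ZMod p)) :
    (α : ℚ) ∈ normSubmonoid (p : ℚ) := by
  have hnat (n : ℕ) (hn : ∀ r : ℕ, r.Prime → r ∣ n → IsSquare (r : ZMod p)) :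
      (n : ℚ) ∈ normSubmonoid (p : ℚ) := by
    induction n using induction_on_primes with
    | zero => exact mem_normSubmonoid.mpr ⟨0, 0, by simp⟩
    | one => simp
    | prime_mul q n hq ih =>
      push_cast
      exact mul_mem (natCast_prime_mem_normSubmonoid hp hq (hn q hq (dvd_mul_right _ _)))
        (ih fun r hr hrn ↦ hn r hr (dvd_mul_of_dvd_right hrn _))
  have habs := hnat α.natAbs fun r hr hrα ↦ h r hr (Int.natCast_dvd.mpr hrα)
  rcases Int.natAbs_eq α with hα | hα
  · rw [hα, Int.cast_natCast]; exact habs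
  · rw [hα]; simpa using mul_mem (neg_one_mem_normSubmonoid hp) habs

theorem exists_prime_not_isSquare_zmod (hp : p ≠ 2) :
    ∃ r : ℕ, r.Prime ∧ ¬IsSquare (r : ZMod p) := by
  by_contra! h
  obtain ⟨c, hc⟩ := FiniteField.exists_nonsquare (F := ZMod p) (by rwa [ZMod.ringChar_zmod_n])
  have hsq (n : ℕ) : IsSquare (n : ZMod p) := by
    induction n using induction_on_primes with
    | zero => simp
    | one => simp
    | prime_mul q n hq ih => push_cast; exact (h q hq).mul ih
  exact hc (by simpa using hsq c.val)

end PrimeOneModFour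

section Splitting

variable {K : Type*} [Field K]

def quaternionBasisOfNorm {a b u v : K} (h : u ^ 2 - b * v ^ 2 = a) :
    QuaternionAlgebra.Basis (Matrix (Fin 2) (Fin 2) K) a 0 b where
  i := !![u, v; -b * v, -u]
  j := !![0, 1; b, 0]
  k := !![b * v, u; -b * u, -b * v]
  i_mul_i := by
    rw [← h]; ext i j; fin_cases i <;> fin_cases j <;> simp [Matrix.mul_apply] <;> ring
  j_mul_j := by ext i j; fin_cases i <;> fin_cases j <;> simp [Matrix.mul_apply]
  i_mul_j := by ext i j; fin_cases i <;> fin_cases j <;> simp [Matrix.mul_apply] <;> ring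
  j_mul_i := by ext i j; fin_cases i <;> fin_cases j <;> simp [Matrix.mul_apply]

theorem quaternionBasisOfNorm_liftHom_apply {a b u v : K} (h : u ^ 2 - b * v ^ 2 = a)
    (q : ℍ[K, a, b]) : (quaternionBasisOfNorm h).liftHom q =
      !![q.re + u * q.imI + b * v * q.imK, v * q.imI + q.imJ + u * q.imK;
        -b * v * q.imI + b * q.imJ - b * u * q.imK, q.re - u * q.imI - b * v * q.imK] := by
  ext i j
  fin_cases i <;> fin_cases j <;>
    simp [quaternionBasisOfNorm, QuaternionAlgebra.Basis.lift, Algebra.algebraMap_eq_smul_one] <;>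
    ring

theorem quaternionBasisOfNorm_liftHom_injective [NeZero (2 : K)] {a b u v : K} (ha : a ≠ 0)
    (hb : b ≠ 0) (h : u ^ 2 - b * v ^ 2 = a) :
    Function.Injective (quaternionBasisOfNorm h).liftHom := by
  rw [injective_iff_map_eq_zero]
  intro q hq
  rw [quaternionBasisOfNorm_liftHom_apply, ← Matrix.ext_iff] at hq
  have e00 := hq 0 0
  have e01 := hq 0 1
  have e10 := hq 1 0
  have e11 := hq 1 1
  simp only [Matrix.of_apply, Matrix.cons_val', Matrix.cons_val_zero, Matrix.cons_val_one,
    Matrix.cons_val_fin_one, Matrix.zero_apply] at e00 e01 e10 e11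
  have hre : q.re = 0 := by
    have : (2 : K) * q.re = 0 := by linear_combination e00 + e11
    exact (mul_eq_zero.mp this).resolve_left two_ne_zero
  have h1 : u * q.imI + b * v * q.imK = 0 := by linear_combination e00 - hre
  have h2 : v * q.imI + u * q.imK = 0 := by
    have : (2 * b) * (v * q.imI + u * q.imK) = 0 := by linear_combination b * e01 - e10
    exact (mul_eq_zero.mp this).resolve_left (mul_ne_zero two_ne_zero hb)
  have hI : q.imI = 0 := by
    have : a * q.imI = 0 := by linear_combination u * h1 - b * v * h2 - q.imI * h
    exact (mul_eq_zero.mp this).resolve_left ha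
  have hK : q.imK = 0 := by
    have : a * q.imK = 0 := by linear_combination u * h2 - v * h1 - q.imK * h
    exact (mul_eq_zero.mp this).resolve_left ha
  have hJ : q.imJ = 0 := by linear_combination e01 - h2
  ext <;> simp [hre, hI, hJ, hK]

theorem nonempty_algEquiv_matrix_of_mem_normSubmonoid [NeZero (2 : K)] {a b : K} (ha : a ≠ 0)
    (hb : b ≠ 0) (h : a ∈ normSubmonoid b) :
    Nonempty (ℍ[K, a, b] ≃ₐ[K] Matrix (Fin 2) (Fin 2) K) := by
  obtain ⟨u, v, h⟩ := mem_normSubmonoid.mp h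
  have hinj := quaternionBasisOfNorm_liftHom_injective ha hb h
  have hrank : Module.finrank K ℍ[K, a, b] = Module.finrank K (Matrix (Fin 2) (Fin 2) K) := by
    simp [QuaternionAlgebra.finrank_eq_four, Module.finrank_matrix]
  exact ⟨AlgEquiv.ofBijective _ ⟨hinj, (LinearMap.injective_iff_surjective_of_finrank_eq_finrank
    (f := (quaternionBasisOfNorm h).liftHom.toLinearMap) hrank).mp hinj⟩⟩

end Splitting

/-- If `p'` is a prime with `p' ≡ 1 (mod 4)` and `α` is an integer
all of whose prime divisors are quadratic residues mod `p'`, then the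
quaternion algebra `(α, p')` over `ℚ` is split. -/
theorem stmt18 (p' : ℕ) (hp' : p'.Prime) (hp'4 : p' % 4 = 1) (α : ℤ)
    (hQR : ∀ r : ℕ, r.Prime → (r : ℤ) ∣ α → IsSquare ((r : ZMod p'))) :
    Nonempty (ℍ[ℚ, (α : ℚ), (p' : ℚ)] ≃ₐ[ℚ] Matrix (Fin 2) (Fin 2) ℚ) := by
  have : Fact p'.Prime := ⟨hp'⟩
  have hα : α ≠ 0 := by
    rintro rfl
    obtain ⟨r, hr, hns⟩ := exists_prime_not_isSquare_zmod (p := p') (by omega)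
    exact hns (hQR r hr (dvd_zero _))
  exact nonempty_algEquiv_matrix_of_mem_normSubmonoid (by exact_mod_cast hα)
    (by exact_mod_cast hp'.ne_zero) (intCast_mem_normSubmonoid hp'4 α hQR)
end
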